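/- Let n ≥ 1, N ≥ 1, and 1 ≤ k ≤ n. For an integer j, let P̂_{2n}^{(N,j)} ∈ ℤ[e_1,…,e_{2n−1}] denote the polynomial obtained by substituting e_{2n} := 1 into the unique polynomial P_{2n}^{(N,j)} ∈ ℤ[e_1,…,e_{2n}] satisfying P_{2n}^{(N,j)}(E_1,…,E_{2n}) = E_j(x_1^N,…,x_{2n}^N) in ℤ[x_1,…,x_{2n}], with the conventions P̂_{2n}^{(N,0)} := 1 and P̂_{2n}^{(N,j)} := 0 for j < 0. Then in R_n one has P̂_{2n}^{(N,k)}(E_{1,n},…,E_{n−1,n},E_{n,n},E_{n−1,n},…,E_{1,n}) − P̂_{2n}^{(N,k−2)}(E_{1,n},…,E_{n−1,n},E_{n,n},E_{n−1,n},…,E_{1,n}) = F_{k,n}^{(N)}. -/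
import Mathlib


open MvPolynomial

noncomputable section

/-- The Laurent polynomial ring `ℤ[λ₁^{±1},…,λₙ^{±1}]`, modeled as the group algebra of
`Fin n →₀ ℤ` over `ℤ`. -/
abbrev LaurentRing (n : ℕ) : Type := AddMonoidAlgebra ℤ (Fin n →₀ ℤ)

/-- The variable `λᵢ`. -/
def lam (n : ℕ) (i : Fin n) : LaurentRing n :=
  AddMonoidAlgebra.single (Finsupp.single i 1) 1

/-- The inverse variable `λᵢ⁻¹`. -/
def lamInv (n : ℕ) (i : Fin n) : LaurentRing n :=
  AddMonoidAlgebra.single (Finsupp.single i (-1)) 1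

/-- The multiset `{λ₁,…,λ_m,λ₁⁻¹,…,λ_m⁻¹}` (the first `m` variables and their inverses),
inside `LaurentRing n`. -/
def lamSet (n m : ℕ) : Multiset (LaurentRing n) :=
  ((Finset.univ.filter (fun i : Fin n => (i : ℕ) < m)).val.map (lam n)) +
    ((Finset.univ.filter (fun i : Fin n => (i : ℕ) < m)).val.map (lamInv n))

/-- `E_{k,m}` (inside `LaurentRing n`): the `k`-th elementary symmetric polynomial in the `2m`
elements `λ₁,…,λ_m,λ₁⁻¹,…,λ_m⁻¹`, with the convention that it is `0` for `k < 0`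
(and automatically `0` for `k > 2m`, `1` for `k = 0`). -/
def EE (n m : ℕ) (k : ℤ) : LaurentRing n :=
  if k < 0 then 0 else (lamSet n m).esymm k.toNat

/-- `F_{k,m} = E_{k,m} - E_{k-2,m}`. -/
def FF (n m : ℕ) (k : ℤ) : LaurentRing n :=
  EE n m k - EE n m (k - 2)

/-- `E_{k,m}^{(N)}`: the element obtained from `E_{k,m}` by the substitution `λᵢ ↦ λᵢᴺ`. -/
def EEPow (n m N : ℕ) (k : ℤ) : LaurentRing n :=
  if k < 0 then 0 else ((lamSet n m).map (· ^ N)).esymm k.toNat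

/-- `F_{k,m}^{(N)} = E_{k,m}^{(N)} - E_{k-2,m}^{(N)}`. -/
def FFPow (n m N : ℕ) (k : ℤ) : LaurentRing n :=
  EEPow n m N k - EEPow n m N (k - 2)

end

noncomputable section

/-- The arguments E_{1,n},…,E_{n-1,n},E_{n,n},E_{n-1,n},…,E_{1,n} fed to the specialized
polynomial, with the value 1 substituted for the last indeterminate e_{2n} (which is what
the hat specialization e_{2n} := 1 does). -/
def palinArgs (n : ℕ) (j : Fin (2 * n)) : LaurentRing n :=
  if (j : ℕ) = 2 * n - 1 then 1
  else if (j : ℕ) + 1 ≤ n then EE n n (((j : ℕ) : ℤ) + 1)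
  else EE n n (2 * (n : ℤ) - (((j : ℕ) : ℤ) + 1))

end

section AuxQ

-- esymm at card = prod
theorem Multiset.powersetCard_card' {α : Type*} (s : Multiset α) :
    s.powersetCard (Multiset.card s) = {s} := by
  have hc : Multiset.card (s.powersetCard (Multiset.card s)) = 1 := by
    rw [Multiset.card_powersetCard, Nat.choose_self]
  obtain ⟨a, ha⟩ := Multiset.card_eq_one.mp hc
  have hmem : a ∈ s.powersetCard (Multiset.card s) := by rw [ha]; simp
  rw [Multiset.mem_powersetCard] at hmem
  rw [ha, Multiset.eq_of_le_of_card_le hmem.1 (le_of_eq hmem.2.symm)]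

theorem Multiset.esymm_card {R : Type*} [CommSemiring R] (s : Multiset R) :
    s.esymm (Multiset.card s) = s.prod := by
  rw [Multiset.esymm, Multiset.powersetCard_card']
  simp

theorem Multiset.esymm_zero' {R : Type*} [CommSemiring R] (s : Multiset R) :
    s.esymm 0 = 1 := by
  simp [Multiset.esymm]

-- reflect of the product of Polynomial.X + Polynomial.C a
theorem reflect_prod_X_add_C {R : Type*} [CommRing R] (s : Multiset R) :
    Polynomial.reflect (Multiset.card s) ((s.map fun a => Polynomial.X + Polynomial.C a).prod)
      = (s.map fun a => 1 + Polynomial.C a * Polynomial.X).prod := by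
  induction s using Multiset.induction_on with
  | empty => simp
  | cons a s ih =>
    have hdeg : ∀ t : Multiset R, ((t.map fun a => Polynomial.X + Polynomial.C a).prod).natDegree ≤ Multiset.card t := by
      intro t
      induction t using Multiset.induction_on with
      | empty => simp
      | cons b t iht =>
        rw [Multiset.map_cons, Multiset.prod_cons, Multiset.card_cons]
        refine le_trans (Polynomial.natDegree_mul_le) ?_
        have h1 : (Polynomial.X + Polynomial.C b).natDegree ≤ 1 := by
          calc ((Polynomial.X + Polynomial.C b).natDegree) ≤ max Polynomial.X.natDegree (Polynomial.C b).natDegree :=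
            Polynomial.natDegree_add_le _ _
          _ ≤ 1 := by simp [Polynomial.natDegree_X_le]
        omega
    have h1 : (Polynomial.X + Polynomial.C a).natDegree ≤ 1 := by
      calc ((Polynomial.X + Polynomial.C a).natDegree) ≤ max Polynomial.X.natDegree (Polynomial.C a).natDegree :=
        Polynomial.natDegree_add_le _ _
      _ ≤ 1 := by simp [Polynomial.natDegree_X_le]
    rw [Multiset.map_cons, Multiset.prod_cons, Multiset.card_cons, Multiset.map_cons,
      Multiset.prod_cons, add_comm (Multiset.card s) 1,
      Polynomial.reflect_mul _ _ h1 (hdeg s), ih]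
    congr 1
    rw [Polynomial.reflect_add, Polynomial.reflect_C a 1, pow_one]
    have : Polynomial.reflect 1 (Polynomial.X : Polynomial R) = 1 := by
      rw [← pow_one (Polynomial.X : Polynomial R), Polynomial.reflect_monomial]
      simp
    rw [this]

theorem esymm_palindrome {R : Type*} [CommRing R] (s : Multiset R)
    (hu : ∀ a ∈ s, IsUnit a) (hinv : s.map Ring.inverse = s) (hprod : s.prod = 1)
    {j : ℕ} (hj : j ≤ Multiset.card s) :
    s.esymm j = s.esymm (Multiset.card s - j) := by
  set p := (s.map fun a => Polynomial.X + Polynomial.C a).prod with hp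
  have hrefl : Polynomial.reflect (Multiset.card s) p = p := by
    rw [hp, reflect_prod_X_add_C]
    have h1 : (s.map fun a => 1 + Polynomial.C a * Polynomial.X)
        = (s.map fun a => Polynomial.C a * (Polynomial.X + Polynomial.C (Ring.inverse a))) := by
      refine Multiset.map_congr rfl fun a ha => ?_
      rw [mul_add, ← Polynomial.C_mul, Ring.mul_inverse_cancel a (hu a ha), map_one, add_comm]
    rw [h1]
    have h2 : (s.map fun a => Polynomial.C a * (Polynomial.X + Polynomial.C (Ring.inverse a))).prod
        = (s.map fun a => (Polynomial.C a : Polynomial R)).prod * (s.map fun a => Polynomial.X + Polynomial.C (Ring.inverse a)).prod :=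
      Multiset.prod_map_mul
    rw [h2, Multiset.prod_hom s (Polynomial.C : R →+* Polynomial R), hprod, map_one, one_mul]
    have h3 : (s.map fun a => Polynomial.X + Polynomial.C (Ring.inverse a))
        = (s.map Ring.inverse).map fun a => Polynomial.X + Polynomial.C a := by
      rw [Multiset.map_map]; rfl
    rw [h3, hinv]
  have hcoeff : p.coeff j = p.coeff (Multiset.card s - j) := by
    conv_lhs => rw [← hrefl]
    rw [Polynomial.coeff_reflect, Polynomial.revAt_le hj]
  have e1 : p.coeff j = s.esymm (Multiset.card s - j) :=
    Multiset.prod_X_add_C_coeff s hj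
  have e2 : p.coeff (Multiset.card s - j) = s.esymm j := by
    rw [Multiset.prod_X_add_C_coeff s (Nat.sub_le _ _), Nat.sub_sub_self hj]
  rw [← e2, ← hcoeff, e1]

end AuxQ

noncomputable section AuxL

theorem lam_mul_lamInv (n : ℕ) (i : Fin n) : lam n i * lamInv n i = 1 := by
  rw [lam, lamInv, AddMonoidAlgebra.single_mul_single]
  simp [AddMonoidAlgebra.one_def]

theorem lamInv_mul_lam (n : ℕ) (i : Fin n) : lamInv n i * lam n i = 1 := by
  rw [mul_comm]; exact lam_mul_lamInv n i

def lamUnit (n : ℕ) (i : Fin n) : (LaurentRing n)ˣ :=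
  ⟨lam n i, lamInv n i, lam_mul_lamInv n i, lamInv_mul_lam n i⟩

theorem isUnit_lam (n : ℕ) (i : Fin n) : IsUnit (lam n i) := ⟨lamUnit n i, rfl⟩

theorem isUnit_lamInv (n : ℕ) (i : Fin n) : IsUnit (lamInv n i) := ⟨(lamUnit n i)⁻¹, rfl⟩

theorem inverse_lam (n : ℕ) (i : Fin n) : Ring.inverse (lam n i) = lamInv n i :=
  Ring.inverse_unit (lamUnit n i)

theorem inverse_lamInv (n : ℕ) (i : Fin n) : Ring.inverse (lamInv n i) = lam n i :=
  Ring.inverse_unit (lamUnit n i)⁻¹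

theorem lamSet_eq (n : ℕ) :
    lamSet n n = Finset.univ.val.map (lam n) + Finset.univ.val.map (lamInv n) := by
  rw [lamSet, Finset.filter_true_of_mem (fun i _ => i.isLt)]

theorem card_lamSet (n : ℕ) : Multiset.card (lamSet n n) = 2 * n := by
  rw [lamSet_eq]
  simp [two_mul]

theorem mem_lamSet_isUnit (n : ℕ) : ∀ a ∈ lamSet n n, IsUnit a := by
  intro a ha
  rw [lamSet_eq, Multiset.mem_add] at ha
  rcases ha with ha | ha <;> rw [Multiset.mem_map] at ha <;> obtain ⟨i, _, rfl⟩ := ha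
  · exact isUnit_lam n i
  · exact isUnit_lamInv n i

theorem map_inverse_lamSet (n : ℕ) : (lamSet n n).map Ring.inverse = lamSet n n := by
  rw [lamSet_eq, Multiset.map_add, Multiset.map_map, Multiset.map_map]
  have h1 : (Ring.inverse ∘ lam n) = lamInv n := funext (inverse_lam n)
  have h2 : (Ring.inverse ∘ lamInv n) = lam n := funext (inverse_lamInv n)
  rw [h1, h2, add_comm]

theorem prod_lamSet (n : ℕ) : (lamSet n n).prod = 1 := by
  rw [lamSet_eq, Multiset.prod_add]
  have h1 : (Finset.univ.val.map (lam n)).prod = ∏ i, lam n i := rfl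
  have h2 : (Finset.univ.val.map (lamInv n)).prod = ∏ i, lamInv n i := rfl
  rw [h1, h2, ← Finset.prod_mul_distrib]
  simp [lam_mul_lamInv]

def zeta (n : ℕ) (j : Fin (2 * n)) : LaurentRing n :=
  if h : (j : ℕ) < n then lam n ⟨j, h⟩
  else lamInv n ⟨(j : ℕ) - n, by have := j.isLt; omega⟩

theorem zeta_of_lt (n : ℕ) (j : Fin (2 * n)) (i : Fin n) (h : (j : ℕ) = (i : ℕ)) :
    zeta n j = lam n i := by
  have hlt : (j : ℕ) < n := h ▸ i.isLt
  rw [zeta, dif_pos hlt]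
  congr 1
  exact Fin.ext h

theorem zeta_of_ge (n : ℕ) (j : Fin (2 * n)) (i : Fin n) (h : (j : ℕ) = (i : ℕ) + n) :
    zeta n j = lamInv n i := by
  have hlt : ¬ ((j : ℕ) < n) := by omega
  rw [zeta, dif_neg hlt]
  congr 1
  refine Fin.ext ?_
  simp [h]

theorem map_zeta (n : ℕ) : Finset.univ.val.map (zeta n) = lamSet n n := by
  set e : Fin n ⊕ Fin n ≃ Fin (2 * n) :=
    finSumFinEquiv.trans (finCongr (two_mul n).symm) with he
  rw [← Finset.map_univ_equiv e, Finset.map_val, Multiset.map_map,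
    ← Finset.univ_disjSum_univ, Finset.val_disjSum, Multiset.disjSum,
    Multiset.map_add, Multiset.map_map, Multiset.map_map, lamSet_eq]
  congr 1
  · refine Multiset.map_congr rfl fun i _ => ?_
    simp only [Function.comp_apply, Equiv.coe_toEmbedding]
    refine zeta_of_lt n _ i ?_
    simp [he, finSumFinEquiv_apply_left]
  · refine Multiset.map_congr rfl fun i _ => ?_
    simp only [Function.comp_apply, Equiv.coe_toEmbedding]
    refine zeta_of_ge n _ i ?_
    simp [he, finSumFinEquiv_apply_right]


theorem palinArgs_eq (n : ℕ) (hn : 1 ≤ n) (j : Fin (2 * n)) :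
    palinArgs n j = (lamSet n n).esymm ((j : ℕ) + 1) := by
  have hjlt : (j : ℕ) < 2 * n := j.isLt
  rw [palinArgs]
  split_ifs with h1 h2
  · rw [h1]
    have h2n : (2 * n - 1) + 1 = 2 * n := by omega
    rw [h2n, ← card_lamSet n, Multiset.esymm_card, prod_lamSet]
  · rw [EE, if_neg (by omega)]
    have ht : ((((j : ℕ) : ℤ)) + 1).toNat = (j : ℕ) + 1 := by omega
    rw [ht]
  · rw [EE, if_neg (by omega)]
    have ht : (2 * (n : ℤ) - (((j : ℕ) : ℤ) + 1)).toNat = 2 * n - ((j : ℕ) + 1) := by omega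
    rw [ht]
    have hpal := esymm_palindrome (lamSet n n) (mem_lamSet_isUnit n) (map_inverse_lamSet n)
      (prod_lamSet n) (j := (j : ℕ) + 1) (by rw [card_lamSet]; omega)
    rw [card_lamSet] at hpal
    exact hpal.symm


theorem key_aeval (n N : ℕ) (hn : 1 ≤ n) (Q : MvPolynomial (Fin (2 * n)) ℤ) (m : ℕ)
    (hQ : MvPolynomial.aeval
            (fun j : Fin (2 * n) => MvPolynomial.esymm (Fin (2 * n)) ℤ ((j : ℕ) + 1)) Q
        = MvPolynomial.aeval
            (fun i : Fin (2 * n) => (MvPolynomial.X i : MvPolynomial (Fin (2 * n)) ℤ) ^ N)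
            (MvPolynomial.esymm (Fin (2 * n)) ℤ m)) :
    MvPolynomial.aeval (palinArgs n) Q = ((lamSet n n).map (· ^ N)).esymm m := by
  have hpal : palinArgs n = fun j : Fin (2 * n) =>
      (aeval (zeta n)) (esymm (Fin (2 * n)) ℤ ((j : ℕ) + 1)) := by
    funext j
    rw [aeval_esymm_eq_multiset_esymm, map_zeta, palinArgs_eq n hn j]
  rw [hpal, ← comp_aeval_apply, hQ, comp_aeval_apply]
  have hx : (fun i : Fin (2 * n) =>
      (aeval (zeta n)) ((MvPolynomial.X i : MvPolynomial (Fin (2 * n)) ℤ) ^ N))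
      = fun i => zeta n i ^ N := by
    funext i; rw [map_pow, aeval_X]
  rw [hx, aeval_esymm_eq_multiset_esymm]
  congr 1
  rw [← map_zeta n, Multiset.map_map]
  rfl

end AuxL

theorem Q_via_Phat (n N : ℕ) (hn : 1 ≤ n) (hN : 1 ≤ N)
    (k : ℤ) (hk1 : 1 ≤ k) (hk2 : k ≤ (n : ℤ))
    (P P' : MvPolynomial (Fin (2 * n)) ℤ)
    (hP : MvPolynomial.aeval
            (fun j : Fin (2 * n) => MvPolynomial.esymm (Fin (2 * n)) ℤ ((j : ℕ) + 1)) P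
        = MvPolynomial.aeval
            (fun i : Fin (2 * n) => (MvPolynomial.X i : MvPolynomial (Fin (2 * n)) ℤ) ^ N)
            (MvPolynomial.esymm (Fin (2 * n)) ℤ k.toNat))
    (hPp : 3 ≤ k → MvPolynomial.aeval
            (fun j : Fin (2 * n) => MvPolynomial.esymm (Fin (2 * n)) ℤ ((j : ℕ) + 1)) P'
        = MvPolynomial.aeval
            (fun i : Fin (2 * n) => (MvPolynomial.X i : MvPolynomial (Fin (2 * n)) ℤ) ^ N)
            (MvPolynomial.esymm (Fin (2 * n)) ℤ (k - 2).toNat)) :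
    MvPolynomial.aeval (palinArgs n) P
        - (if k = 1 then 0 else if k = 2 then 1 else MvPolynomial.aeval (palinArgs n) P')
      = FFPow n n N k := by
  have hsP := key_aeval n N hn P k.toNat hP
  rw [FFPow, EEPow, EEPow, if_neg (by omega : ¬ k < 0)]
  by_cases h1 : k = 1
  · rw [if_pos h1, if_pos (by omega : k - 2 < 0), hsP, sub_zero]
  · by_cases h2 : k = 2
    · rw [if_neg h1, if_pos h2, if_neg (by omega : ¬ k - 2 < 0)]
      have h0 : (k - 2).toNat = 0 := by omega
      rw [h0, Multiset.esymm_zero', hsP]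
    · have h3 : 3 ≤ k := by omega
      rw [if_neg h1, if_neg h2, if_neg (by omega : ¬ k - 2 < 0), hsP,
        key_aeval n N hn P' (k - 2).toNat (hPp h3)]
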